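/- Let X ⊆ ℝ^{d_x} be nonempty, convex, and closed, and let Y ⊆ ℝ^{d_y} be nonempty, convex, and compact with diameter at most D_y > 0; fix y₀ ∈ Y, δ > 0, ε > 0, L > 0. Suppose f : ℝ^{d_x} × ℝ^{d_y} → ℝ satisfies |f(x₁,y₁) − f(x₂,y₂)| ≤ L·(‖x₁−x₂‖² + ‖y₁−y₂‖²)^{1/2} for all x₁,x₂ ∈ ℝ^{d_x} and y₁,y₂ ∈ Y. Define Φ(x) = max_{y∈Y} f(x,y), Φ̃(x) = max_{y∈Y} ( f(x,y) − (δε/(2 d_x D_y²))‖y − y₀‖² ), and their uniform-ball smoothings Φ_δ(x) = E_{w ~ Unif(B^{d_x}(0,1))}[Φ(x + δw)] and Φ̃_δ(x) = E_{w ~ Unif(B^{d_x}(0,1))}[Φ̃(x + δw)]. Then Φ_δ and Φ̃_δ are differentiable, and for all x ∈ X and all η > 0: ‖G_X(x, ∇Φ_δ(x), η) − G_X(x, ∇Φ̃_δ(x), η)‖ ≤ ε/2, where G_X(x, g, η) = (x − Π_X(x − η g))/η. -/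

import Mathlib

/-!
Both max functions are `L`-Lipschitz in `x`, and on `Y` the penalty
`(δε/(2 d_x D_y²))‖y - y₀‖²` lies in `[0, δε/(2 d_x)]`, so `0 ≤ Φ - Φ̃ ≤ δε/(2 d_x)`.
The uniform-ball smoothing of a Lipschitz function is differentiable (Rademacher's theorem and
differentiation under the integral sign), and it is the average over the ball of radius `δ`.
Two balls of radius `δ` whose centres are `d` apart differ in a set of relative volume at most
`d_x d / δ`, so smoothing a function bounded by `M` makes it `d_x M / δ`-Lipschitz; applied to
`Φ - Φ̃` this bounds `‖∇Φ_δ - ∇Φ̃_δ‖` by `ε/2`. Finally the projection onto a closed convex set is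
nonexpansive, so `G_X(x, ·, η)` is `1`-Lipschitz.
-/

open MeasureTheory Metric Set

noncomputable section

abbrev Euc (n : ℕ) := EuclideanSpace ℝ (Fin n)

/-- The uniform probability distribution on the closed unit ball of `ℝ^n`. -/
def unifBall (n : ℕ) : Measure (Euc n) :=
  (volume (closedBall (0 : Euc n) 1))⁻¹ • volume.restrict (closedBall (0 : Euc n) 1)

/-- The primal function `Φ(x) = max_{y∈Y} f(x,y)`. -/
def primal {dx dy : ℕ} (Y : Set (Euc dy)) (f : Euc dx → Euc dy → ℝ) (x : Euc dx) : ℝ :=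
  sSup (f x '' Y)

/-- The uniform-ball smoothing `Φ_δ(x) = E_{w ~ Unif(B^{d_x}(0,1))}[Φ(x + δw)]`. -/
def ballSmooth (n : ℕ) (δ : ℝ) (h : Euc n → ℝ) (x : Euc n) : ℝ :=
  ∫ w : Euc n, h (x + δ • w) ∂(unifBall n)

/-- Gradient mapping `G_X(x, g, η) = (x − Π_X(x − ηg))/η`. -/
def gradMapX {n : ℕ} (projX : Euc n → Euc n) (x g : Euc n) (η : ℝ) : Euc n :=
  η⁻¹ • (x - projX (x - η • g))

open scoped NNReal ENNReal
open Module

theorem norm_setIntegral_sub_setIntegral_le {α F : Type*} [MeasurableSpace α] {ν : Measure α}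
    [NormedAddCommGroup F] [NormedSpace ℝ F] {f : α → F} {s t : Set α}
    (hs : MeasurableSet s) (ht : MeasurableSet t) (hμs : ν s < ∞) (hμt : ν t < ∞)
    (hfs : IntegrableOn f s ν) (hft : IntegrableOn f t ν) {M : ℝ} (hM : ∀ x, ‖f x‖ ≤ M) :
    ‖∫ x in s, f x ∂ν - ∫ x in t, f x ∂ν‖ ≤ M * (ν.real (s \ t) + ν.real (t \ s)) := by
  have hsplit : ∫ x in s, f x ∂ν - ∫ x in t, f x ∂ν
      = ∫ x in s \ t, f x ∂ν - ∫ x in t \ s, f x ∂ν := by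
    rw [← integral_inter_add_sdiff₀ ht.nullMeasurableSet hfs,
      ← integral_inter_add_sdiff₀ hs.nullMeasurableSet hft, inter_comm]
    abel
  have hbound : ∀ u ⊆ s ∪ t, ‖∫ x in u, f x ∂ν‖ ≤ M * ν.real u := fun u hu =>
    norm_setIntegral_le_of_norm_le_const ((measure_mono hu).trans_lt
      ((measure_union_le s t).trans_lt (ENNReal.add_lt_top.2 ⟨hμs, hμt⟩))) fun x _ => hM x
  rw [hsplit, mul_add]
  exact (norm_sub_le _ _).trans (add_le_add (hbound _ (sdiff_subset.trans subset_union_left))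
    (hbound _ (sdiff_subset.trans subset_union_right)))

/-- The ball of radius `r - dist x y / 2` about the midpoint lies in both balls, and Bernoulli's
inequality bounds the volume of its complement. -/
theorem addHaar_real_closedBall_sdiff_closedBall_le {E : Type*} [NormedAddCommGroup E]
    [NormedSpace ℝ E] [MeasurableSpace E] [BorelSpace E] [FiniteDimensional ℝ E]
    (μ : Measure E) [μ.IsAddHaarMeasure] (x y : E) {r : ℝ} (hr : 0 < r) :
    μ.real (closedBall x r \ closedBall y r) ≤
      finrank ℝ E * (dist x y / (2 * r)) * μ.real (closedBall x r) := by
  set n := finrank ℝ E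
  set d := dist x y
  have hfin : μ (closedBall x r) ≠ ∞ := measure_closedBall_lt_top.ne
  rcases le_or_gt d (2 * r) with hd | hd
  · set ρ := r - d / 2 with hρ
    have hρ0 : 0 ≤ ρ := by linarith
    set C := closedBall (midpoint ℝ x y) ρ
    have hCx : C ⊆ closedBall x r :=
      closedBall_subset_closedBall' (by simp only [dist_midpoint_left, Real.norm_ofNat]; linarith)
    have hCy : C ⊆ closedBall y r :=
      closedBall_subset_closedBall' (by simp only [dist_midpoint_right, Real.norm_ofNat]; linarith)
    have hbern : 1 - n * (d / (2 * r)) ≤ (1 - d / (2 * r)) ^ n := by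
      have hdr : d / (2 * r) ≤ 1 := (div_le_one (by positivity)).2 hd
      simpa [sub_eq_add_neg] using one_add_mul_le_pow (a := -(d / (2 * r))) (by linarith) n
    have hρpow : ρ ^ n = r ^ n * (1 - d / (2 * r)) ^ n := by
      rw [← mul_pow]; congr 1; field_simp; ring
    calc μ.real (closedBall x r \ closedBall y r) ≤ μ.real (closedBall x r \ C) :=
          measureReal_mono (sdiff_subset_sdiff_right hCy)
            (measure_ne_top_of_subset sdiff_subset hfin)
      _ = r ^ n * μ.real (closedBall (0 : E) 1) * (1 - (1 - d / (2 * r)) ^ n) := by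
          rw [measureReal_sdiff hCx measurableSet_closedBall hfin,
            μ.addHaar_real_closedBall' _ hr.le, μ.addHaar_real_closedBall' _ hρ0, hρpow]
          ring
      _ ≤ r ^ n * μ.real (closedBall (0 : E) 1) * (n * (d / (2 * r))) := by gcongr; linarith
      _ = _ := by rw [μ.addHaar_real_closedBall' _ hr.le]; ring
  · have hxy : x ≠ y := by
      rintro rfl; simp [d] at hd; linarith
    have : Nontrivial E := nontrivial_of_ne x y hxy
    have hn : (1 : ℝ) ≤ n := by exact_mod_cast finrank_pos
    have hratio : 1 ≤ n * (d / (2 * r)) :=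
      one_le_mul_of_one_le_of_one_le hn ((one_le_div (by positivity)).2 hd.le)
    calc μ.real (closedBall x r \ closedBall y r) ≤ μ.real (closedBall x r) :=
          measureReal_mono sdiff_subset hfin
      _ ≤ _ := le_mul_of_one_le_left measureReal_nonneg hratio

theorem ballSmooth_eq_setAverage {n : ℕ} {δ : ℝ} (hδ : 0 < δ) (h : Euc n → ℝ) (x : Euc n) :
    ballSmooth n δ h x = ⨍ y in closedBall x δ, h y := by
  have hscale : ∫ w in closedBall (0 : Euc n) 1, h (x + δ • w) =
      (δ ^ n)⁻¹ * ∫ w in closedBall (0 : Euc n) δ, h (x + w) := by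
    rw [Measure.setIntegral_comp_smul_of_pos volume (fun w => h (x + w)) _ hδ,
      _root_.smul_closedBall _ _ zero_le_one]
    simp [abs_of_pos hδ]
  have htrans : ∫ w in closedBall (0 : Euc n) δ, h (x + w) = ∫ y in closedBall x δ, h y := by
    simpa using (measurePreserving_add_left volume x).setIntegral_preimage_emb
      (measurableEmbedding_addLeft x) h (closedBall x δ)
  rw [ballSmooth, unifBall, integral_smul_measure, setAverage_eq, hscale, htrans,
    volume.addHaar_real_closedBall' _ hδ.le, finrank_euclideanSpace_fin, ENNReal.toReal_inv,
    ← measureReal_def, smul_eq_mul, smul_eq_mul, mul_inv]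
  ring

theorem abs_ballSmooth_sub_le {n : ℕ} {δ : ℝ} (hδ : 0 < δ) {h : Euc n → ℝ} (hh : Continuous h)
    {M : ℝ} (hM : ∀ z, |h z| ≤ M) (x₁ x₂ : Euc n) :
    |ballSmooth n δ h x₁ - ballSmooth n δ h x₂| ≤ n * M / δ * ‖x₁ - x₂‖ := by
  set V := volume.real (closedBall (0 : Euc n) δ)
  have hV : 0 < V := ENNReal.toReal_pos (measure_closedBall_pos volume 0 hδ).ne'
    measure_closedBall_lt_top.ne
  have hlune : ∀ a b : Euc n, dist a b = ‖x₁ - x₂‖ →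
      volume.real (closedBall a δ \ closedBall b δ) ≤ n * (‖x₁ - x₂‖ / (2 * δ)) * V := by
    intro a b hab
    have := addHaar_real_closedBall_sdiff_closedBall_le volume a b hδ
    rwa [hab, finrank_euclideanSpace_fin, volume.addHaar_real_closedBall_center a] at this
  have hM0 : 0 ≤ M := (abs_nonneg _).trans (hM 0)
  have hint : ∀ a : Euc n, IntegrableOn h (closedBall a δ) :=
    fun a => hh.continuousOn.integrableOn_compact (isCompact_closedBall a δ)
  calc |ballSmooth n δ h x₁ - ballSmooth n δ h x₂|
      = V⁻¹ * |(∫ y in closedBall x₁ δ, h y) - ∫ y in closedBall x₂ δ, h y| := by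
        rw [ballSmooth_eq_setAverage hδ, ballSmooth_eq_setAverage hδ, setAverage_eq,
          setAverage_eq, volume.addHaar_real_closedBall_center x₁,
          volume.addHaar_real_closedBall_center x₂, smul_eq_mul, smul_eq_mul, ← mul_sub,
          abs_mul, abs_of_pos (inv_pos.2 hV)]
    _ ≤ V⁻¹ * (M * (volume.real (closedBall x₁ δ \ closedBall x₂ δ) +
          volume.real (closedBall x₂ δ \ closedBall x₁ δ))) := by
        gcongr
        exact norm_setIntegral_sub_setIntegral_le measurableSet_closedBall measurableSet_closedBall
          measure_closedBall_lt_top measure_closedBall_lt_top (hint x₁) (hint x₂) hM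
    _ ≤ V⁻¹ * (M * (n * (‖x₁ - x₂‖ / (2 * δ)) * V + n * (‖x₁ - x₂‖ / (2 * δ)) * V)) := by
        gcongr
        exacts [hlune _ _ (dist_eq_norm _ _), hlune _ _ (dist_comm x₁ x₂ ▸ dist_eq_norm _ _)]
    _ = n * M / δ * ‖x₁ - x₂‖ := by field_simp; ring

instance isProbabilityMeasure_unifBall (n : ℕ) : IsProbabilityMeasure (unifBall n) := by
  refine ⟨?_⟩
  rw [unifBall, Measure.smul_apply, Measure.restrict_apply_univ, smul_eq_mul,
    ENNReal.inv_mul_cancel (measure_closedBall_pos volume 0 one_pos).ne'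
      measure_closedBall_lt_top.ne]

theorem unifBall_absolutelyContinuous (n : ℕ) : unifBall n ≪ volume :=
  Measure.smul_absolutelyContinuous.trans Measure.restrict_le_self.absolutelyContinuous

theorem Continuous.integrable_unifBall {n : ℕ} {g : Euc n → ℝ} (hg : Continuous g) :
    Integrable g (unifBall n) :=
  (hg.continuousOn.integrableOn_compact (isCompact_closedBall 0 1)).smul_measure
    (ENNReal.inv_ne_top.2 (measure_closedBall_pos volume 0 one_pos).ne')

theorem LipschitzWith.differentiable_ballSmooth {n : ℕ} {δ : ℝ} (hδ : δ ≠ 0) {K : ℝ≥0}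
    {h : Euc n → ℝ} (hh : LipschitzWith K h) : Differentiable ℝ (ballSmooth n δ h) := by
  intro x₀
  have hshift : Continuous fun w : Euc n => x₀ + δ • w := by fun_prop
  have hdiff : ∀ᵐ w ∂unifBall n, DifferentiableAt ℝ h (x₀ + δ • w) :=
    (unifBall_absolutelyContinuous n).ae_le
      (((measurePreserving_add_left volume x₀).quasiMeasurePreserving.comp
        (Measure.quasiMeasurePreserving_smul volume hδ)).ae hh.ae_differentiableAt)
  refine (hasFDerivAt_integral_of_dominated_loc_of_lip (F := fun x w => h (x + δ • w))
    (bound := fun _ => K) Filter.univ_mem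
    (.of_forall fun x => (hh.continuous.comp (by fun_prop)).aestronglyMeasurable)
    (hh.continuous.comp hshift).integrable_unifBall
    ((measurable_fderiv ℝ h).comp hshift.measurable).aestronglyMeasurable
    (.of_forall fun w => ?_) (integrable_const _) ?_).2.differentiableAt
  · rw [Real.nnabs_coe]
    exact fun a _ b _ => by simpa using hh (a + δ • w) (b + δ • w)
  · filter_upwards [hdiff] with w hw
    exact (hasFDerivAt_comp_add_right _).2 hw.hasFDerivAt

theorem ballSmooth_sub {n : ℕ} {δ : ℝ} {h₁ h₂ : Euc n → ℝ} (hh₁ : Continuous h₁)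
    (hh₂ : Continuous h₂) :
    ballSmooth n δ (h₁ - h₂) = ballSmooth n δ h₁ - ballSmooth n δ h₂ :=
  funext fun x => integral_sub (hh₁.comp (by fun_prop)).integrable_unifBall
    (hh₂.comp (by fun_prop)).integrable_unifBall

theorem norm_gradient_sub_le_of_lipschitzWith {F : Type*} [NormedAddCommGroup F]
    [InnerProductSpace ℝ F] [CompleteSpace F] {u v : F → ℝ} {x : F}
    (hu : DifferentiableAt ℝ u x) (hv : DifferentiableAt ℝ v x) {K : ℝ≥0}
    (huv : LipschitzWith K (u - v)) : ‖gradient u x - gradient v x‖ ≤ K := by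
  rw [gradient, gradient, ← map_sub, LinearIsometryEquiv.norm_map, ← fderiv_sub hu hv]
  exact norm_fderiv_le_of_lipschitz ℝ huv

theorem norm_gradient_ballSmooth_sub_le {n : ℕ} {δ : ℝ} (hδ : 0 < δ) {h₁ h₂ : Euc n → ℝ}
    {K₁ K₂ : ℝ≥0} (hh₁ : LipschitzWith K₁ h₁) (hh₂ : LipschitzWith K₂ h₂) {M : ℝ}
    (hM : ∀ z, |h₁ z - h₂ z| ≤ M) (x : Euc n) :
    ‖gradient (ballSmooth n δ h₁) x - gradient (ballSmooth n δ h₂) x‖ ≤ n * M / δ := by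
  have hM0 : 0 ≤ M := (abs_nonneg _).trans (hM 0)
  have hlip : LipschitzWith (n * M / δ).toNNReal (ballSmooth n δ h₁ - ballSmooth n δ h₂) := by
    rw [← ballSmooth_sub hh₁.continuous hh₂.continuous]
    refine LipschitzWith.of_dist_le' fun a b => ?_
    simpa [Real.dist_eq, dist_eq_norm] using
      abs_ballSmooth_sub_le hδ (hh₁.continuous.sub hh₂.continuous) hM a b
  calc _ ≤ ((n * M / δ).toNNReal : ℝ) := norm_gradient_sub_le_of_lipschitzWith
        ((hh₁.differentiable_ballSmooth hδ.ne') x) ((hh₂.differentiable_ballSmooth hδ.ne') x) hlip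
    _ = n * M / δ := Real.coe_toNNReal _ (by positivity)

theorem abs_sSup_image_sub_sSup_image_le {α : Type*} {s : Set α} (hs : s.Nonempty)
    {u v : α → ℝ} (hu : BddAbove (u '' s)) (hv : BddAbove (v '' s)) {K : ℝ}
    (huv : ∀ y ∈ s, |u y - v y| ≤ K) : |sSup (u '' s) - sSup (v '' s)| ≤ K := by
  have hle : ∀ u' v' : α → ℝ, BddAbove (v' '' s) → (∀ y ∈ s, u' y ≤ v' y + K) →
      sSup (u' '' s) - sSup (v' '' s) ≤ K := fun u' v' hv' h => by
    rw [sub_le_iff_le_add']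
    refine csSup_le (hs.image _) ?_
    rintro _ ⟨y, hy, rfl⟩
    linarith [h y hy, le_csSup hv' (mem_image_of_mem _ hy)]
  exact abs_sub_le_iff.2 ⟨hle u v hv fun y hy => by linarith [(abs_le.1 (huv y hy)).2],
    hle v u hu fun y hy => by linarith [(abs_le.1 (huv y hy)).1]⟩

theorem primal_lipschitzWith {dx dy : ℕ} {Y : Set (Euc dy)} (hY : Y.Nonempty)
    {g : Euc dx → Euc dy → ℝ} (hg : ∀ x, BddAbove (g x '' Y)) {K : ℝ≥0}
    (hK : ∀ y ∈ Y, LipschitzWith K (g · y)) : LipschitzWith K (primal Y g) :=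
  LipschitzWith.of_dist_le_mul fun x₁ x₂ =>
    abs_sSup_image_sub_sSup_image_le hY (hg x₁) (hg x₂) fun y hy =>
      (hK y hy).dist_le_mul x₁ x₂

section NearestPoint

variable {F : Type*} [NormedAddCommGroup F] [InnerProductSpace ℝ F] {X : Set F}

theorem inner_sub_sub_nonpos_of_forall_norm_sub_le (hX : Convex ℝ X) {z p : F} (hp : p ∈ X)
    (hmin : ∀ w ∈ X, ‖z - p‖ ≤ ‖z - w‖) {w : F} (hw : w ∈ X) :
    inner ℝ (z - p) (w - p) ≤ 0 := by
  have : Nonempty X := ⟨⟨p, hp⟩⟩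
  refine (norm_eq_iInf_iff_real_inner_le_zero hX hp).1 (le_antisymm ?_ ?_) w hw
  · exact le_ciInf fun w => hmin w w.2
  · exact ciInf_le ⟨0, forall_mem_range.2 fun w : X => norm_nonneg (z - w)⟩ ⟨p, hp⟩

/-- Adding the variational inequalities at `z₁` and `z₂` gives
`‖P z₁ - P z₂‖² ≤ ⟪z₁ - z₂, P z₁ - P z₂⟫`. -/
theorem lipschitzWith_one_of_forall_norm_sub_le (hX : Convex ℝ X) {P : F → F}
    (hP : ∀ z, P z ∈ X ∧ ∀ w ∈ X, ‖z - P z‖ ≤ ‖z - w‖) : LipschitzWith 1 P := by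
  refine LipschitzWith.mk_one fun z₁ z₂ => ?_
  have h₁ := inner_sub_sub_nonpos_of_forall_norm_sub_le hX (hP z₁).1 (hP z₁).2 (hP z₂).1
  have h₂ := inner_sub_sub_nonpos_of_forall_norm_sub_le hX (hP z₂).1 (hP z₂).2 (hP z₁).1
  have hsq : ‖P z₁ - P z₂‖ ^ 2 ≤ ‖z₁ - z₂‖ * ‖P z₁ - P z₂‖ := by
    calc ‖P z₁ - P z₂‖ ^ 2
        = inner ℝ (z₁ - z₂) (P z₁ - P z₂) + inner ℝ (z₁ - P z₁) (P z₂ - P z₁)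
          + inner ℝ (z₂ - P z₂) (P z₁ - P z₂) := by
          rw [← real_inner_self_eq_norm_sq, show P z₂ - P z₁ = -(P z₁ - P z₂) by abel,
            inner_neg_right, ← sub_eq_add_neg, ← inner_sub_left, ← inner_add_left]
          congr 1
          abel
      _ ≤ ‖z₁ - z₂‖ * ‖P z₁ - P z₂‖ := by linarith [real_inner_le_norm (z₁ - z₂) (P z₁ - P z₂)]
  rw [dist_eq_norm, dist_eq_norm]
  nlinarith [norm_nonneg (P z₁ - P z₂), norm_nonneg (z₁ - z₂)]

end NearestPoint

theorem norm_gradMapX_sub_le {n : ℕ} {X : Set (Euc n)} (hX : Convex ℝ X) {P : Euc n → Euc n}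
    (hP : ∀ z, P z ∈ X ∧ ∀ w ∈ X, ‖z - P z‖ ≤ ‖z - w‖) (x g₁ g₂ : Euc n) {η : ℝ} (hη : 0 < η) :
    ‖gradMapX P x g₁ η - gradMapX P x g₂ η‖ ≤ ‖g₁ - g₂‖ := by
  have hproj := (lipschitzWith_one_of_forall_norm_sub_le hX hP).dist_le_mul
    (x - η • g₂) (x - η • g₁)
  rw [NNReal.coe_one, one_mul, dist_eq_norm, dist_eq_norm,
    show x - η • g₂ - (x - η • g₁) = η • (g₁ - g₂) by module, norm_smul,
    Real.norm_of_nonneg hη.le] at hproj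
  rw [gradMapX, gradMapX, ← smul_sub, norm_smul, Real.norm_of_nonneg (inv_nonneg.2 hη.le),
    show x - P (x - η • g₁) - (x - P (x - η • g₂)) = P (x - η • g₂) - P (x - η • g₁) by abel]
  calc η⁻¹ * ‖P (x - η • g₂) - P (x - η • g₁)‖ ≤ η⁻¹ * (η * ‖g₁ - g₂‖) := by gcongr
    _ = ‖g₁ - g₂‖ := by field_simp

theorem gradMap_regularized_smoothed_close_general (dx dy : ℕ) (hdx : 0 < dx)
    (X : Set (Euc dx)) (hXconv : Convex ℝ X)
    (Y : Set (Euc dy)) (hYne : Y.Nonempty) (hYcpt : IsCompact Y)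
    (Dy δ ε L : ℝ) (hDy : 0 < Dy) (hδ : 0 < δ) (hε : 0 < ε)
    (hdiam : ∀ y₁ ∈ Y, ∀ y₂ ∈ Y, ‖y₁ - y₂‖ ≤ Dy)
    (y₀ : Euc dy) (hy₀ : y₀ ∈ Y)
    (f : Euc dx → Euc dy → ℝ)
    (hlip : ∀ x₁ x₂ : Euc dx, ∀ y₁ ∈ Y, ∀ y₂ ∈ Y,
      |f x₁ y₁ - f x₂ y₂| ≤ L * Real.sqrt (‖x₁ - x₂‖ ^ 2 + ‖y₁ - y₂‖ ^ 2))
    (projX : Euc dx → Euc dx)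
    (hprojX : ∀ z, projX z ∈ X ∧ ∀ w ∈ X, ‖z - projX z‖ ≤ ‖z - w‖) :
    Differentiable ℝ (ballSmooth dx δ (primal Y f)) ∧
    Differentiable ℝ (ballSmooth dx δ
      (primal Y (fun x y => f x y - δ * ε / (2 * (dx : ℝ) * Dy ^ 2) * ‖y - y₀‖ ^ 2))) ∧
    ∀ x ∈ X, ∀ η : ℝ, 0 < η →
      ‖gradMapX projX x (gradient (ballSmooth dx δ (primal Y f)) x) η -
        gradMapX projX x (gradient (ballSmooth dx δ
          (primal Y (fun x y => f x y - δ * ε / (2 * (dx : ℝ) * Dy ^ 2) * ‖y - y₀‖ ^ 2))) x) η‖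
        ≤ ε / 2 := by
  set r := δ * ε / (2 * (dx : ℝ) * Dy ^ 2) with hr
  set g : Euc dx → Euc dy → ℝ := fun x y => f x y - r * ‖y - y₀‖ ^ 2
  have hfx : ∀ y ∈ Y, LipschitzWith L.toNNReal (f · y) := fun y hy =>
    .of_dist_le' fun x₁ x₂ => by simpa [Real.dist_eq, dist_eq_norm] using hlip x₁ x₂ y hy y hy
  have hgx : ∀ y ∈ Y, LipschitzWith L.toNNReal (g · y) := fun y hy =>
    .of_dist_le' fun x₁ x₂ => by simpa [g, Real.dist_eq, dist_eq_norm] using hlip x₁ x₂ y hy y hy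
  have hfy : ∀ x, ContinuousOn (f x) Y := fun x =>
    (LipschitzOnWith.of_dist_le' (K := L) fun y₁ hy₁ y₂ hy₂ => by
      simpa [Real.dist_eq, dist_eq_norm] using hlip x x y₁ hy₁ y₂ hy₂).continuousOn
  have hbf : ∀ x, BddAbove (f x '' Y) := fun x => hYcpt.bddAbove_image (hfy x)
  have hbg : ∀ x, BddAbove (g x '' Y) := fun x =>
    hYcpt.bddAbove_image ((hfy x).sub (by fun_prop))
  have hgap : ∀ x, |primal Y f x - primal Y g x| ≤ δ * ε / (2 * dx) := fun x =>
    abs_sSup_image_sub_sSup_image_le hYne (hbf x) (hbg x) fun y hy => by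
      have hpen : r * ‖y - y₀‖ ^ 2 ≤ r * Dy ^ 2 := by gcongr; exact hdiam y hy y₀ hy₀
      have hrDy : r * Dy ^ 2 = δ * ε / (2 * dx) := by rw [hr]; field_simp
      rw [sub_sub_cancel, abs_of_nonneg (by positivity)]
      linarith
  have hΦ := primal_lipschitzWith hYne hbf hfx
  have hΨ := primal_lipschitzWith hYne hbg hgx
  refine ⟨hΦ.differentiable_ballSmooth hδ.ne', hΨ.differentiable_ballSmooth hδ.ne',
    fun x _ η hη => ?_⟩
  calc _ ≤ ‖gradient (ballSmooth dx δ (primal Y f)) x -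
        gradient (ballSmooth dx δ (primal Y g)) x‖ := norm_gradMapX_sub_le hXconv hprojX _ _ _ hη
    _ ≤ dx * (δ * ε / (2 * dx)) / δ := norm_gradient_ballSmooth_sub_le hδ hΦ hΨ hgap x
    _ = ε / 2 := by field_simp

/-- with `Φ(x) = max_{y∈Y} f(x,y)`,
`Φ̃(x) = max_{y∈Y} (f(x,y) − (δε/(2 d_x D_y²))‖y − y₀‖²)` and their uniform-ball smoothings
`Φ_δ, Φ̃_δ`, both smoothings are differentiable and the gradient mappings satisfy
`‖G_X(x, ∇Φ_δ(x), η) − G_X(x, ∇Φ̃_δ(x), η)‖ ≤ ε/2` for all `x ∈ X` and `η > 0`. -/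
theorem gradMap_regularized_smoothed_close (dx dy : ℕ) (hdx : 0 < dx) (hdy : 0 < dy)
    (X : Set (Euc dx)) (hXne : X.Nonempty) (hXconv : Convex ℝ X) (hXcl : IsClosed X)
    (Y : Set (Euc dy)) (hYne : Y.Nonempty) (hYconv : Convex ℝ Y) (hYcpt : IsCompact Y)
    (Dy δ ε L : ℝ) (hDy : 0 < Dy) (hδ : 0 < δ) (hε : 0 < ε) (hL : 0 < L)
    (hdiam : ∀ y₁ ∈ Y, ∀ y₂ ∈ Y, ‖y₁ - y₂‖ ≤ Dy)
    (y₀ : Euc dy) (hy₀ : y₀ ∈ Y)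
    (f : Euc dx → Euc dy → ℝ)
    (hlip : ∀ x₁ x₂ : Euc dx, ∀ y₁ ∈ Y, ∀ y₂ ∈ Y,
      |f x₁ y₁ - f x₂ y₂| ≤ L * Real.sqrt (‖x₁ - x₂‖ ^ 2 + ‖y₁ - y₂‖ ^ 2))
    (projX : Euc dx → Euc dx)
    (hprojX : ∀ z, projX z ∈ X ∧ ∀ w ∈ X, ‖z - projX z‖ ≤ ‖z - w‖) :
    Differentiable ℝ (ballSmooth dx δ (primal Y f)) ∧
    Differentiable ℝ (ballSmooth dx δ
      (primal Y (fun x y => f x y - δ * ε / (2 * (dx : ℝ) * Dy ^ 2) * ‖y - y₀‖ ^ 2))) ∧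
    ∀ x ∈ X, ∀ η : ℝ, 0 < η →
      ‖gradMapX projX x (gradient (ballSmooth dx δ (primal Y f)) x) η -
        gradMapX projX x (gradient (ballSmooth dx δ
          (primal Y (fun x y => f x y - δ * ε / (2 * (dx : ℝ) * Dy ^ 2) * ‖y - y₀‖ ^ 2))) x) η‖
        ≤ ε / 2 :=
  gradMap_regularized_smoothed_close_general dx dy hdx X hXconv Y hYne hYcpt Dy δ ε L hDy hδ hε
    hdiam y₀ hy₀ f hlip projX hprojX
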